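/- Let O be a 2×2 complex matrix such that O² is unitary (i.e., (O†)²O² = I). Then either O is unitary, or there exist orthonormal vectors v₁, v₂ ∈ ℂ² and scalars a, b ∈ ℂ with |a|·|b| = 1 and |a| ≠ 1 such that O = a|v₁⟩⟨v₂| + b|v₂⟩⟨v₁|. -/

import Mathlib

/-!
Let `P = O†O` and `Q = OO†`. If `O²` is unitary then `QP = PQ = 1`; together with `QO = OP`
this shows that `O` maps an eigenvector of `P` for the eigenvalue `μ` to an eigenvector of `P`
for `μ⁻¹`, multiplying its squared norm by `μ`. If `O` is not unitary, pick a unit eigenvector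
`w` of `P` for an eigenvalue `μ ≠ 1` (so `μ > 0`). Then `O w = √μ v₁` with `v₁` a unit
eigenvector for `μ⁻¹ ≠ μ`, hence orthogonal to `w`; and `O v₁` is again an eigenvector for `μ`,
hence orthogonal to `v₁`, so `O v₁ = b w` with `|b|² = μ⁻¹`. In the orthonormal basis `(v₁, w)`
this is the claimed form with `a = √μ`.
-/

open Matrix

/-- The rank-one operator |v⟩⟨w| : u ↦ ⟨w,u⟩ v, as a matrix. -/
noncomputable def outer (v w : Fin 2 → ℂ) : Matrix (Fin 2) (Fin 2) ℂ :=
  Matrix.vecMulVec v (star w)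

namespace Matrix

open scoped ComplexOrder

theorem mul_mul_mul_eq_one_of_sq_mul_sq_eq_one {R n : Type*} [CommRing R] [Fintype n]
    [DecidableEq n] {A B : Matrix n n R} (h : B * B * (A * A) = 1) : A * B * (B * A) = 1 := by
  rw [← Matrix.mul_assoc] at h
  -- `B * B * A` is a left inverse of `A`, hence also a right inverse
  simpa only [Matrix.mul_assoc] using mul_eq_one_comm.mp h

theorem star_mulVec_dotProduct_mulVec {R m n : Type*} [CommSemiring R] [StarRing R] [Fintype m]
    [Fintype n] (A : Matrix m n R) (x y : n → R) :
    star (A *ᵥ x) ⬝ᵥ (A *ᵥ y) = star x ⬝ᵥ ((Aᴴ * A) *ᵥ y) := by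
  rw [star_mulVec, ← dotProduct_mulVec, mulVec_mulVec]

theorem conjTranspose_mul_self_mulVec_mulVec_eq_inv_smul {K n : Type*} [Field K] [StarRing K]
    [Fintype n] [DecidableEq n] {A : Matrix n n K} (hA : Aᴴ * A * (A * Aᴴ) = 1) {x : n → K} {c : K}
    (hx : (Aᴴ * A) *ᵥ x = c • x) : (Aᴴ * A) *ᵥ (A *ᵥ x) = c⁻¹ • (A *ᵥ x) := by
  have key : c • ((Aᴴ * A) *ᵥ (A *ᵥ x)) = A *ᵥ x :=
    calc c • ((Aᴴ * A) *ᵥ (A *ᵥ x)) = (Aᴴ * A) *ᵥ (A *ᵥ ((Aᴴ * A) *ᵥ x)) := by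
          rw [hx, mulVec_smul, mulVec_smul]
      _ = (Aᴴ * A * (A * Aᴴ) * A) *ᵥ x := by simp only [mulVec_mulVec, Matrix.mul_assoc]
      _ = A *ᵥ x := by rw [hA, Matrix.one_mul]
  rcases eq_or_ne c 0 with rfl | hc
  · rw [zero_smul] at key
    rw [← key, mulVec_zero, smul_zero]
  · rwa [eq_inv_smul_iff₀ hc]

variable {𝕜 n : Type*} [RCLike 𝕜] [Fintype n]

theorem star_smul_dotProduct_smul (c : 𝕜) (x : n → 𝕜) :
    star (c • x) ⬝ᵥ (c • x) = ((‖c‖ ^ 2 : ℝ) : 𝕜) * (star x ⬝ᵥ x) := by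
  rw [star_smul, smul_dotProduct, dotProduct_smul, smul_smul, smul_eq_mul, RCLike.star_def,
    RCLike.conj_mul, RCLike.ofReal_pow]

theorem IsHermitian.dotProduct_eq_zero_of_mulVec_eq_smul {A : Matrix n n 𝕜} (hA : A.IsHermitian)
    {x y : n → 𝕜} {c d : ℝ} (hx : A *ᵥ x = (c : 𝕜) • x) (hy : A *ᵥ y = (d : 𝕜) • y)
    (hcd : c ≠ d) : star x ⬝ᵥ y = 0 := by
  have h : (c : 𝕜) * (star x ⬝ᵥ y) = d * (star x ⬝ᵥ y) :=
    calc (c : 𝕜) * (star x ⬝ᵥ y) = star (A *ᵥ x) ⬝ᵥ y := by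
          rw [hx, star_smul, smul_dotProduct, RCLike.star_def, RCLike.conj_ofReal, smul_eq_mul]
      _ = star x ⬝ᵥ (A *ᵥ y) := by rw [star_mulVec, ← dotProduct_mulVec, hA.eq]
      _ = d * (star x ⬝ᵥ y) := by rw [hy, dotProduct_smul, smul_eq_mul]
  exact (mul_eq_mul_right_iff.mp h).resolve_left (by exact_mod_cast hcd)

theorem PosSemidef.exists_unit_eigenvector_ne_one [DecidableEq n] {A : Matrix n n 𝕜}
    (hA : A.PosSemidef) (h : A ≠ 1) :
    ∃ (μ : ℝ) (w : n → 𝕜), 0 ≤ μ ∧ μ ≠ 1 ∧ star w ⬝ᵥ w = 1 ∧ A *ᵥ w = (μ : 𝕜) • w := by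
  obtain ⟨i, hi⟩ : ∃ i, hA.1.eigenvalues i ≠ 1 := by
    by_contra! hall
    refine h ?_
    rw [hA.1.spectral_theorem, show (RCLike.ofReal ∘ hA.1.eigenvalues : n → 𝕜) = fun _ => 1 from
      funext fun i => by simp [hall i], diagonal_one, map_one]
  refine ⟨_, hA.1.eigenvectorBasis i, hA.eigenvalues_nonneg i, hi, ?_, ?_⟩
  · rw [dotProduct_comm, ← EuclideanSpace.inner_eq_star_dotProduct, inner_self_eq_norm_sq_to_K,
      hA.1.eigenvectorBasis.orthonormal.1 i]
    simp
  · rw [hA.1.mulVec_eigenvectorBasis, RCLike.real_smul_eq_coe_smul (K := 𝕜)]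

theorem exists_unit_eigenvector_mulVec_eq_sqrt_smul [DecidableEq n] {A : Matrix n n 𝕜}
    (hA : Aᴴ * A * (A * Aᴴ) = 1) {μ : ℝ} (hμ : 0 < μ) {w : n → 𝕜} (hw : star w ⬝ᵥ w = 1)
    (hAw : (Aᴴ * A) *ᵥ w = (μ : 𝕜) • w) :
    ∃ v : n → 𝕜, star v ⬝ᵥ v = 1 ∧ (Aᴴ * A) *ᵥ v = ((μ⁻¹ : ℝ) : 𝕜) • v ∧
      A *ᵥ w = ((√μ : ℝ) : 𝕜) • v := by
  have hsqrt : ((√μ : ℝ) : 𝕜) ≠ 0 := RCLike.ofReal_ne_zero.mpr (Real.sqrt_pos.mpr hμ).ne'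
  refine ⟨((√μ : ℝ) : 𝕜)⁻¹ • (A *ᵥ w), ?_, ?_, by rw [smul_inv_smul₀ hsqrt]⟩
  · rw [star_smul_dotProduct_smul, star_mulVec_dotProduct_mulVec, hAw, dotProduct_smul, hw,
      smul_eq_mul, mul_one, norm_inv, RCLike.norm_ofReal, abs_of_nonneg (Real.sqrt_nonneg μ),
      inv_pow, Real.sq_sqrt hμ.le, ← RCLike.ofReal_mul, inv_mul_cancel₀ hμ.ne', RCLike.ofReal_one]
  · rw [mulVec_smul, conjTranspose_mul_self_mulVec_mulVec_eq_inv_smul hA hAw, smul_comm,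
      RCLike.ofReal_inv]

end Matrix

theorem outer_mulVec (v w u : Fin 2 → ℂ) : outer v w *ᵥ u = (star w ⬝ᵥ u) • v := by
  ext i
  simp [outer, vecMulVec_mulVec, mul_comm]

theorem mul_outer (A : Matrix (Fin 2) (Fin 2) ℂ) (v w : Fin 2 → ℂ) :
    A * outer v w = outer (A *ᵥ v) w :=
  mul_vecMulVec A v (star w)

theorem smul_outer (c : ℂ) (v w : Fin 2 → ℂ) : outer (c • v) w = c • outer v w :=
  smul_vecMulVec c v (star w)

theorem outer_add_outer_eq_one {v w : Fin 2 → ℂ} (hv : star v ⬝ᵥ v = 1)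
    (hw : star w ⬝ᵥ w = 1) (hvw : star v ⬝ᵥ w = 0) : outer v v + outer w w = 1 := by
  -- the matrix with rows `star v`, `star w` is unitary, so `Bᴴ * B = 1` as well
  let B : Matrix (Fin 2) (Fin 2) ℂ := of ![star v, star w]
  have hwv : star w ⬝ᵥ v = 0 := by rw [star_dotProduct, hvw, star_zero]
  have hB : B * Bᴴ = 1 := by
    ext i j
    fin_cases i <;> fin_cases j <;>
      simp [B, mul_apply', dotProduct, Fin.sum_univ_two] at hv hw hvw hwv ⊢ <;> assumption
  calc outer v v + outer w w = Bᴴ * B := by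
        ext i j
        simp [B, outer, mul_apply, vecMulVec_apply, Fin.sum_univ_two]
    _ = 1 := mul_eq_one_comm.mp hB

theorem eq_smul_of_dotProduct_eq_zero {v w : Fin 2 → ℂ} (hv : star v ⬝ᵥ v = 1)
    (hw : star w ⬝ᵥ w = 1) (hvw : star v ⬝ᵥ w = 0) {z : Fin 2 → ℂ} (hz : star v ⬝ᵥ z = 0) :
    z = (star w ⬝ᵥ z) • w := by
  conv_lhs => rw [← one_mulVec z, ← outer_add_outer_eq_one hv hw hvw]
  rw [add_mulVec, outer_mulVec, outer_mulVec, hz, zero_smul, zero_add]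

theorem eq_smul_outer_add_smul_outer {v w : Fin 2 → ℂ} (hv : star v ⬝ᵥ v = 1)
    (hw : star w ⬝ᵥ w = 1) (hvw : star v ⬝ᵥ w = 0) {O : Matrix (Fin 2) (Fin 2) ℂ} {a b : ℂ}
    (hOw : O *ᵥ w = a • v) (hOv : O *ᵥ v = b • w) : O = a • outer v w + b • outer w v := by
  conv_lhs => rw [← Matrix.mul_one O, ← outer_add_outer_eq_one hv hw hvw]
  rw [Matrix.mul_add, mul_outer, mul_outer, hOw, hOv, smul_outer, smul_outer, add_comm]

theorem exists_eq_smul_outer_add_smul_outer {O : Matrix (Fin 2) (Fin 2) ℂ}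
    (hO : Oᴴ * O * (O * Oᴴ) = 1) {μ : ℝ} (hμ0 : 0 < μ) (hμ1 : μ ≠ 1) {w : Fin 2 → ℂ}
    (hw : star w ⬝ᵥ w = 1) (hPw : (Oᴴ * O) *ᵥ w = (μ : ℂ) • w) :
    ∃ (v₁ v₂ : Fin 2 → ℂ) (a b : ℂ),
      star v₁ ⬝ᵥ v₁ = 1 ∧ star v₂ ⬝ᵥ v₂ = 1 ∧ star v₁ ⬝ᵥ v₂ = 0 ∧
      ‖a‖ * ‖b‖ = 1 ∧ ‖a‖ ≠ 1 ∧ O = a • outer v₁ v₂ + b • outer v₂ v₁ := by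
  have hP : (Oᴴ * O).IsHermitian := isHermitian_conjTranspose_mul_self O
  obtain ⟨v₁, hv₁, hPv₁, hOw⟩ := exists_unit_eigenvector_mulVec_eq_sqrt_smul hO hμ0 hw hPw
  set a : ℂ := ((√μ : ℝ) : ℂ)
  have ha : ‖a‖ = √μ := by simp [a, Real.sqrt_nonneg]
  have hμ : μ⁻¹ ≠ μ := by
    rw [Ne, inv_eq_self₀]
    rintro (h | h | h) <;> [linarith; linarith; exact hμ1 h]
  have hv₁w : star v₁ ⬝ᵥ w = 0 := hP.dotProduct_eq_zero_of_mulVec_eq_smul hPv₁ hPw hμ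
  have hPOv₁ : (Oᴴ * O) *ᵥ (O *ᵥ v₁) = (μ : ℂ) • (O *ᵥ v₁) := by
    simpa using conjTranspose_mul_self_mulVec_mulVec_eq_inv_smul hO hPv₁
  set b := star w ⬝ᵥ (O *ᵥ v₁)
  have hOv₁ : O *ᵥ v₁ = b • w := eq_smul_of_dotProduct_eq_zero hv₁ hw hv₁w
    (hP.dotProduct_eq_zero_of_mulVec_eq_smul hPv₁ hPOv₁ hμ)
  have hb : ‖b‖ ^ 2 = μ⁻¹ := by
    have := star_mulVec_dotProduct_mulVec O v₁ v₁
    rw [hPv₁, dotProduct_smul, hv₁, hOv₁, star_smul_dotProduct_smul, hw, smul_eq_mul,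
      mul_one, mul_one] at this
    exact RCLike.ofReal_injective this
  refine ⟨v₁, w, a, b, hv₁, hw, hv₁w, ?_, ?_, eq_smul_outer_add_smul_outer hv₁ hw hv₁w hOw hOv₁⟩
  · have : (‖a‖ * ‖b‖) ^ 2 = 1 := by
      rw [mul_pow, ha, Real.sq_sqrt hμ0.le, hb, mul_inv_cancel₀ hμ0.ne']
    exact (pow_eq_one_iff_of_nonneg (by positivity) two_ne_zero).mp this
  · rwa [ha, Ne, Real.sqrt_eq_one]

theorem stmt7 (O : Matrix (Fin 2) (Fin 2) ℂ)
    (h : (Oᴴ * Oᴴ) * (O * O) = 1) :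
    Oᴴ * O = 1 ∨
      ∃ (v₁ v₂ : Fin 2 → ℂ) (a b : ℂ),
        dotProduct (star v₁) v₁ = 1 ∧ dotProduct (star v₂) v₂ = 1 ∧
        dotProduct (star v₁) v₂ = 0 ∧
        ‖a‖ * ‖b‖ = 1 ∧ ‖a‖ ≠ 1 ∧
        O = a • outer v₁ v₂ + b • outer v₂ v₁ := by
  have hQP : O * Oᴴ * (Oᴴ * O) = 1 := mul_mul_mul_eq_one_of_sq_mul_sq_eq_one h
  by_cases hu : Oᴴ * O = 1
  · exact Or.inl hu
  obtain ⟨μ, w, hμ0, hμ1, hw, hPw⟩ := by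
    open scoped ComplexOrder in
    exact (posSemidef_conjTranspose_mul_self O).exists_unit_eigenvector_ne_one hu
  have hμ : μ ≠ 0 := by
    rintro rfl
    have hw0 : w = 0 := by
      rw [← one_mulVec w, ← hQP, ← mulVec_mulVec, hPw, RCLike.ofReal_zero, zero_smul, mulVec_zero]
    simp [hw0] at hw
  exact Or.inr <| exists_eq_smul_outer_add_smul_outer (mul_eq_one_comm.mp hQP)
    (hμ0.lt_of_ne' hμ) hμ1 hw hPw
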